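/- Let H be a 3-uniform linear hypergraph containing no Berge cycle of length 4, let v be a vertex, and let x, y be distinct vertices in N₁(v). Define S_x as the set of vertices w ∉ N₁(v) ∪ {v} such that some hyperedge h with h ∩ N₁(v) = {x} contains w, and similarly S_y. If {x, y, v} is not a hyperedge of H, then S_x ∩ S_y = ∅; if {x, y, v} is a hyperedge of H, then |S_x ∩ S_y| ≤ 2. -/

import Mathlib

open Finset

/-- Degree of a vertex: number of hyperedges containing it. -/
def hyperDeg {V : Type*} [DecidableEq V] (H : Finset (Finset V)) (v : V) : ℕ :=
  (H.filter fun e => v ∈ e).card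

/-- First neighborhood: vertices other than `v` sharing a hyperedge with `v`. -/
def N1 {V : Type*} [DecidableEq V] (H : Finset (Finset V)) (v : V) : Finset V :=
  ((H.filter fun e => v ∈ e).biUnion id).erase v

/-- Second neighborhood: vertices outside `N1 H v ∪ {v}` lying in a hyperedge
that meets `N1 H v`. -/
def N2 {V : Type*} [DecidableEq V] (H : Finset (Finset V)) (v : V) : Finset V :=
  ((H.filter fun e => (e ∩ N1 H v).Nonempty).biUnion id) \ insert v (N1 H v)

/-- A hypergraph is linear if any two distinct hyperedges share at most one vertex. -/
def IsLinear {V : Type*} [DecidableEq V] (H : Finset (Finset V)) : Prop :=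
  ∀ e ∈ H, ∀ f ∈ H, e ≠ f → (e ∩ f).card ≤ 1

/-- A Berge cycle of length `k`: `k` distinct vertices and `k` distinct hyperedges,
with `v i, v (i+1) ∈ h i` cyclically. -/
def HasBergeCycle {V : Type*} (H : Finset (Finset V)) (k : ℕ) : Prop :=
  ∃ (v : ZMod k → V) (h : ZMod k → Finset V),
    Function.Injective v ∧ Function.Injective h ∧
    ∀ i, h i ∈ H ∧ v i ∈ h i ∧ v (i + 1) ∈ h i

/-- `Sset H v x` : the set of vertices `w ∉ N1(v) ∪ {v}` contained in some hyperedge `h`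
with `h ∩ N1(v) = {x}`. -/
def Sset {V : Type*} [DecidableEq V] (H : Finset (Finset V)) (v x : V) : Finset V :=
  ((H.filter fun h => h ∩ N1 H v = {x}).biUnion id) \ insert v (N1 H v)

/-
If `w ∈ S_x ∩ S_y`, with witness edges `X ∋ x, w` and `Y ∋ y, w`, then `v x w y` is closed into
a Berge 4-cycle by edges through `v x` and `v y`, unless these coincide, which forces
`{x, y, v} ∈ H`. For distinct `w, w' ∈ S_x ∩ S_y`, the walk `x w y w'` is a Berge 4-cycle unless
the two `x`-witness or the two `y`-witness edges coincide. For three such vertices one of the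
two coincidences then holds for all of them, and that edge would contain four vertices.
-/

lemma injective_vecFour_of_nodup {α : Type*} {a b c d : α} (h : [a, b, c, d].Nodup) :
    Function.Injective ![a, b, c, d] := by
  simp only [List.nodup_cons, List.mem_cons, List.not_mem_nil] at h
  intro i j hij
  fin_cases i <;> fin_cases j <;> simp_all

lemma hasBergeCycle_four {V : Type*} {H : Finset (Finset V)} {a b c d : V}
    {e₁ e₂ e₃ e₄ : Finset V} (hv : [a, b, c, d].Nodup) (he : [e₁, e₂, e₃, e₄].Nodup)
    (h₁ : e₁ ∈ H) (h₂ : e₂ ∈ H) (h₃ : e₃ ∈ H) (h₄ : e₄ ∈ H)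
    (ha₁ : a ∈ e₁) (hb₁ : b ∈ e₁) (hb₂ : b ∈ e₂) (hc₂ : c ∈ e₂)
    (hc₃ : c ∈ e₃) (hd₃ : d ∈ e₃) (hd₄ : d ∈ e₄) (ha₄ : a ∈ e₄) : HasBergeCycle H 4 :=
  ⟨![a, b, c, d], ![e₁, e₂, e₃, e₄], injective_vecFour_of_nodup hv,
    injective_vecFour_of_nodup he, fun i => by fin_cases i <;> exact ⟨‹_›, ‹_›, ‹_›⟩⟩

lemma eq_and_eq_or_eq_and_eq_of_pairwise {α β γ : Type*} (f : α → β) (g : α → γ) {a b c : α}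
    (hab : f a = f b ∨ g a = g b) (hac : f a = f c ∨ g a = g c) (hbc : f b = f c ∨ g b = g c) :
    (f a = f b ∧ f a = f c) ∨ (g a = g b ∧ g a = g c) := by
  grind

section PrivateEdges

variable {V : Type*} [DecidableEq V] {H : Finset (Finset V)} {v x y w w' : V}
  {e e' f f' : Finset V}

def IsPrivateEdge (H : Finset (Finset V)) (v x : V) (e : Finset V) : Prop :=
  e ∈ H ∧ e ∩ N1 H v = {x}

lemma mem_N1 : w ∈ N1 H v ↔ w ≠ v ∧ ∃ e ∈ H, v ∈ e ∧ w ∈ e := by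
  simp only [N1, mem_erase, mem_biUnion, mem_filter, id]
  tauto

lemma mem_Sset :
    w ∈ Sset H v x ↔ (∃ e, IsPrivateEdge H v x e ∧ w ∈ e) ∧ w ≠ v ∧ w ∉ N1 H v := by
  simp only [Sset, IsPrivateEdge, mem_sdiff, mem_biUnion, mem_filter, id, mem_insert, not_or]

lemma ne_of_notMem_N1 (hx : x ∈ N1 H v) (hw : w ∉ N1 H v) : x ≠ w :=
  fun h => hw (h ▸ hx)

namespace IsPrivateEdge

lemma mem (he : IsPrivateEdge H v x e) : x ∈ e :=
  (mem_inter.1 (he.2 ▸ mem_singleton_self x)).1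

lemma ne (hxy : x ≠ y) (he : IsPrivateEdge H v x e) (hf : IsPrivateEdge H v y f) : e ≠ f := by
  rintro rfl
  exact hxy (singleton_inj.1 (he.2 ▸ hf.2))

lemma notMem_center (he : IsPrivateEdge H v x e) (hcard : 2 < #e) : v ∉ e := by
  intro hv
  have hsub : e.erase v ⊆ e ∩ N1 H v := fun u hu =>
    mem_inter.2 ⟨mem_of_mem_erase hu,
      mem_N1.2 ⟨ne_of_mem_erase hu, e, he.1, hv, mem_of_mem_erase hu⟩⟩
  have := card_le_card hsub
  rw [he.2, card_erase_of_mem hv, card_singleton] at this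
  omega

lemma eq_or_eq (hNoC4 : ¬ HasBergeCycle H 4) (hx : x ∈ N1 H v) (hy : y ∈ N1 H v)
    (hxy : x ≠ y) (hw : w ∉ N1 H v) (hw' : w' ∉ N1 H v) (hww' : w ≠ w')
    (he : IsPrivateEdge H v x e) (he' : IsPrivateEdge H v x e')
    (hf : IsPrivateEdge H v y f) (hf' : IsPrivateEdge H v y f')
    (hwe : w ∈ e) (hwf : w ∈ f) (hw'e' : w' ∈ e') (hw'f' : w' ∈ f') : e = e' ∨ f = f' := by
  by_contra! hne
  have hyw := ne_of_notMem_N1 hy hw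
  have := ne_of_notMem_N1 hx hw
  have := ne_of_notMem_N1 hx hw'
  have := ne_of_notMem_N1 hy hw'
  have := he.ne hxy hf
  have := he.ne hxy hf'
  have := he'.ne hxy hf
  have := he'.ne hxy hf'
  refine hNoC4 (hasBergeCycle_four (a := x) (b := w) (c := y) (d := w') ?_ ?_
    he.1 hf.1 hf'.1 he'.1 he.mem hwe hwf hf.mem hf'.mem hw'f' hw'e' he'.mem)
  · simp [*, hyw.symm]
  · simp [*, Ne.symm]

end IsPrivateEdge

end PrivateEdges

section SsetInter

variable {V : Type*} [DecidableEq V] {H : Finset (Finset V)} {v x y : V}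

theorem Sset_inter_Sset_eq_empty (hUnif : ∀ e ∈ H, #e = 3) (hNoC4 : ¬ HasBergeCycle H 4)
    (hx : x ∈ N1 H v) (hy : y ∈ N1 H v) (hxy : x ≠ y) (hxyv : {x, y, v} ∉ H) :
    Sset H v x ∩ Sset H v y = ∅ := by
  refine eq_empty_of_forall_notMem fun w hw => hNoC4 ?_
  obtain ⟨⟨X, hX, hwX⟩, hwv, hwN⟩ := mem_Sset.1 (mem_inter.1 hw).1
  obtain ⟨⟨Y, hY, hwY⟩, -, -⟩ := mem_Sset.1 (mem_inter.1 hw).2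
  obtain ⟨hxv, ex, hexH, hvex, hxex⟩ := mem_N1.1 hx
  obtain ⟨hyv, ey, heyH, hvey, hyey⟩ := mem_N1.1 hy
  have hvX := hX.notMem_center (by rw [hUnif X hX.1]; omega)
  have hvY := hY.notMem_center (by rw [hUnif Y hY.1]; omega)
  have hexey : ex ≠ ey := by
    rintro rfl
    have hcard : #({x, y, v} : Finset V) = 3 := card_eq_three.2 ⟨x, y, v, hxy, hxv, hyv, rfl⟩
    have hsub : ({x, y, v} : Finset V) ⊆ ex := by simp [insert_subset_iff, *]
    exact hxyv (eq_of_subset_of_card_le hsub (by rw [hUnif ex hexH, hcard]) ▸ hexH)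
  have hyw := ne_of_notMem_N1 hy hwN
  have := ne_of_notMem_N1 hx hwN
  have := hX.ne hxy hY
  have : ex ≠ X := fun h => hvX (h ▸ hvex)
  have : ex ≠ Y := fun h => hvY (h ▸ hvex)
  have : X ≠ ey := fun h => hvX (h ▸ hvey)
  have : Y ≠ ey := fun h => hvY (h ▸ hvey)
  refine hasBergeCycle_four (a := v) (e₁ := ex) (e₂ := X) (e₃ := Y) (e₄ := ey)
    ?_ ?_ hexH hX.1 hY.1 heyH hvex hxex hX.mem hwX hwY hY.mem hyey hvey
  · simp [*, hxv.symm, hyv.symm, hwv.symm, hyw.symm]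
  · simp [*]

theorem card_Sset_inter_Sset_le_two (hUnif : ∀ e ∈ H, #e = 3) (hNoC4 : ¬ HasBergeCycle H 4)
    (hx : x ∈ N1 H v) (hy : y ∈ N1 H v) (hxy : x ≠ y) :
    #(Sset H v x ∩ Sset H v y) ≤ 2 := by
  set S := Sset H v x ∩ Sset H v y
  have hSN : ∀ w ∈ S, w ∉ N1 H v := fun w hw => (mem_Sset.1 (mem_inter.1 hw).1).2.2
  choose! X hX hwX using fun w (hw : w ∈ S) => (mem_Sset.1 (mem_inter.1 hw).1).1
  choose! Y hY hwY using fun w (hw : w ∈ S) => (mem_Sset.1 (mem_inter.1 hw).2).1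
  have hpair : ∀ w ∈ S, ∀ w' ∈ S, w ≠ w' → X w = X w' ∨ Y w = Y w' :=
    fun w hw w' hw' hww' => (hX w hw).eq_or_eq hNoC4 hx hy hxy (hSN w hw) (hSN w' hw') hww'
      (hX w' hw') (hY w hw) (hY w' hw') (hwX w hw) (hwY w hw) (hwX w' hw') (hwY w' hw')
  by_contra! hlt
  obtain ⟨a, ha, b, hb, c, hc, hab, hac, hbc⟩ := two_lt_card.1 hlt
  have hfour : ∀ z ∈ N1 H v, ∀ e ∈ H, z ∈ e → a ∈ e → b ∈ e → c ∈ e → False := by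
    intro z hz e he hze hae hbe hce
    have := ne_of_notMem_N1 hz (hSN a ha)
    have := ne_of_notMem_N1 hz (hSN b hb)
    have := ne_of_notMem_N1 hz (hSN c hc)
    have hcard : #({z, a, b, c} : Finset V) = 4 := by simp [*]
    have := card_le_card (show {z, a, b, c} ⊆ e by simp [insert_subset_iff, *])
    rw [hcard, hUnif e he] at this
    omega
  rcases eq_and_eq_or_eq_and_eq_of_pairwise X Y (hpair a ha b hb hab) (hpair a ha c hc hac)
    (hpair b hb c hc hbc) with ⟨hXab, hXac⟩ | ⟨hYab, hYac⟩
  · exact hfour x hx (X a) (hX a ha).1 (hX a ha).mem (hwX a ha)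
      (hXab ▸ hwX b hb) (hXac ▸ hwX c hc)
  · exact hfour y hy (Y a) (hY a ha).1 (hY a ha).mem (hwY a ha)
      (hYab ▸ hwY b hb) (hYac ▸ hwY c hc)

end SsetInter

theorem stmt_6_general {V : Type*} [DecidableEq V]
    (H : Finset (Finset V))
    (hUnif : ∀ e ∈ H, e.card = 3)
    (hNoC4 : ¬ HasBergeCycle H 4)
    (v x y : V) (hx : x ∈ N1 H v) (hy : y ∈ N1 H v) (hxy : x ≠ y) :
    (({x, y, v} : Finset V) ∉ H → Sset H v x ∩ Sset H v y = ∅) ∧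
    (({x, y, v} : Finset V) ∈ H → (Sset H v x ∩ Sset H v y).card ≤ 2) :=
  ⟨Sset_inter_Sset_eq_empty hUnif hNoC4 hx hy hxy,
    fun _ => card_Sset_inter_Sset_le_two hUnif hNoC4 hx hy hxy⟩

theorem stmt_6 {V : Type*} [Fintype V] [DecidableEq V]
    (H : Finset (Finset V))
    (hUnif : ∀ e ∈ H, e.card = 3)
    (hLin : IsLinear H)
    (hNoC4 : ¬ HasBergeCycle H 4)
    (v x y : V) (hx : x ∈ N1 H v) (hy : y ∈ N1 H v) (hxy : x ≠ y) :
    (({x, y, v} : Finset V) ∉ H → Sset H v x ∩ Sset H v y = ∅) ∧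
    (({x, y, v} : Finset V) ∈ H → (Sset H v x ∩ Sset H v y).card ≤ 2) :=
  stmt_6_general H hUnif hNoC4 v x y hx hy hxy
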